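/- arXiv:1702.01964 — 2 statements merged into one kernel-verified Lean document; each statement's English description precedes it below -/
import Mathlib

section
/- Suppose a random variable X taking values in ℕ and a random variable T ≥ 0 satisfy: for each n with P(X = n) > 0, conditionally on {X = n} the variable T is Gamma(γ, n-d) distributed (density proportional to t^{n-d-1}e^{-γt}), for some integer d with n > d. Let n_min = min{n : P(X=n) > 0} and suppose P(X = n) ≤ c^{-(n-d)}/(n-d)! for some c > 0 and all n. Then P(X > n_min | T < a) → 0 as a → 0. -/
/-!
Write `m = nmin - d` and `F_k(a) = γ^k/(k-1)! ∫₀^a t^(k-1) e^(-γt) dt` for the Gamma(γ, k)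
distribution function. Comparing `e^(-γt)` with `1` and with `e^(-γa)` on `[0, a]` gives
`e^(-γa) (γa)^k/k! ≤ F_k(a) ≤ (γa)^k/k!`. Hence, for `a ≤ 1`, the atom `X = nmin` alone makes
`P(T < a) ≥ P(X = nmin) F_m(a) ≥ const · a^m`, while the bound on `P(X = n)` turns the series
`∑_{n > nmin} P(X = n) F_{n-d}(a)` into at most `e^(γ/c) a^(m+1)`. The ratio is `O(a)`.
-/

open MeasureTheory Set Filter

open scoped Nat Topology

theorem toReal_measure_le_tsum_of_subset_iUnion {α : Type*} [MeasurableSpace α]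
    {μ : Measure α} [IsFiniteMeasure μ] {s : Set α} {t : ℕ → Set α} {b : ℕ → ℝ}
    (hst : s ⊆ ⋃ j, t j) (hb : Summable b) (htb : ∀ j, (μ (t j)).toReal ≤ b j) :
    (μ s).toReal ≤ ∑' j, b j := by
  have hb0 (j : ℕ) : 0 ≤ b j := ENNReal.toReal_nonneg.trans (htb j)
  have hle : μ s ≤ ENNReal.ofReal (∑' j, b j) := calc
    μ s ≤ ∑' j, μ (t j) := (measure_mono hst).trans (measure_iUnion_le t)
    _ ≤ ∑' j, ENNReal.ofReal (b j) := ENNReal.tsum_le_tsum fun j =>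
      (ENNReal.le_ofReal_iff_toReal_le (measure_ne_top μ _) (hb0 j)).2 (htb j)
    _ = ENNReal.ofReal (∑' j, b j) := (ENNReal.ofReal_tsum_of_nonneg hb0 hb).symm
  simpa [ENNReal.toReal_ofReal (tsum_nonneg hb0)] using
    ENNReal.toReal_mono ENNReal.ofReal_ne_top hle

theorem Real.tsum_pow_div_factorial (x : ℝ) : ∑' n, x ^ n / n ! = Real.exp x := by
  rw [Real.exp_eq_exp_ℝ]
  exact (NormedSpace.expSeries_div_hasSum_exp x).tsum_eq

theorem tendsto_div_nhdsGT_zero_of_le_pow_succ {f g : ℝ → ℝ} {m : ℕ} {C c : ℝ} (hc : 0 < c)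
    (hf : ∀ᶠ a in 𝓝[>] 0, 0 ≤ f a ∧ f a ≤ C * a ^ (m + 1) ∧ c * a ^ m ≤ g a) :
    Tendsto (fun a => f a / g a) (𝓝[>] 0) (𝓝 0) := by
  have hlin : Tendsto (fun a : ℝ => C / c * a) (𝓝[>] 0) (𝓝 0) := by
    simpa using ((continuous_const_mul (C / c)).tendsto 0).mono_left nhdsWithin_le_nhds
  refine tendsto_of_tendsto_of_tendsto_of_le_of_le' tendsto_const_nhds hlin ?_ ?_
  all_goals filter_upwards [hf, self_mem_nhdsWithin] with a ⟨hf0, hfC, hgc⟩ (ha : 0 < a)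
  · exact div_nonneg hf0 ((by positivity : 0 ≤ c * a ^ m).trans hgc)
  · calc f a / g a ≤ C * a ^ (m + 1) / (c * a ^ m) :=
          div_le_div₀ (hf0.trans hfC) hfC (by positivity) hgc
      _ = C / c * a := by field_simp; ring

noncomputable def gammaCDF (γ : ℝ) (k : ℕ) (a : ℝ) : ℝ :=
  γ ^ k / (k - 1)! * ∫ t in (0 : ℝ)..a, t ^ (k - 1) * Real.exp (-γ * t)

section GammaCDF

variable {γ a : ℝ}

theorem integral_pow_mul_exp_neg_le (hγ : 0 ≤ γ) (ha : 0 ≤ a) (j : ℕ) :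
    ∫ t in (0 : ℝ)..a, t ^ j * Real.exp (-γ * t) ≤ a ^ (j + 1) / (j + 1) := by
  calc ∫ t in (0 : ℝ)..a, t ^ j * Real.exp (-γ * t) ≤ ∫ t in (0 : ℝ)..a, t ^ j := by
        refine intervalIntegral.integral_mono_on ha
          (Continuous.intervalIntegrable (by fun_prop) _ _)
          (Continuous.intervalIntegrable (by fun_prop) _ _) fun t ht => ?_
        have : Real.exp (-γ * t) ≤ 1 := Real.exp_le_one_iff.2 (by nlinarith [ht.1])
        exact mul_le_of_le_one_right (pow_nonneg ht.1 j) this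
    _ = a ^ (j + 1) / (j + 1) := by simp [integral_pow]

theorem exp_neg_mul_mul_le_integral_pow_mul_exp_neg (hγ : 0 ≤ γ) (ha : 0 ≤ a) (j : ℕ) :
    Real.exp (-γ * a) * (a ^ (j + 1) / (j + 1)) ≤
      ∫ t in (0 : ℝ)..a, t ^ j * Real.exp (-γ * t) := by
  calc Real.exp (-γ * a) * (a ^ (j + 1) / (j + 1))
        = ∫ t in (0 : ℝ)..a, t ^ j * Real.exp (-γ * a) := by simp [integral_pow]; ring
    _ ≤ ∫ t in (0 : ℝ)..a, t ^ j * Real.exp (-γ * t) := by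
        refine intervalIntegral.integral_mono_on ha
          (Continuous.intervalIntegrable (by fun_prop) _ _)
          (Continuous.intervalIntegrable (by fun_prop) _ _) fun t ht => ?_
        exact mul_le_mul_of_nonneg_left (Real.exp_le_exp.2 (by nlinarith [ht.2]))
          (pow_nonneg ht.1 j)

theorem gammaCDF_nonneg (hγ : 0 ≤ γ) (ha : 0 ≤ a) (k : ℕ) : 0 ≤ gammaCDF γ k a := by
  refine mul_nonneg (by positivity) (intervalIntegral.integral_nonneg ha fun t ht => ?_)
  have := ht.1
  positivity

theorem gammaCDF_le (hγ : 0 ≤ γ) (ha : 0 ≤ a) {k : ℕ} (hk : k ≠ 0) :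
    gammaCDF γ k a ≤ (γ * a) ^ k / k ! := by
  obtain ⟨j, rfl⟩ := Nat.exists_eq_succ_of_ne_zero hk
  calc gammaCDF γ (j + 1) a ≤ γ ^ (j + 1) / j ! * (a ^ (j + 1) / (j + 1)) := by
        simp only [gammaCDF, Nat.add_sub_cancel]
        exact mul_le_mul_of_nonneg_left (integral_pow_mul_exp_neg_le hγ ha j) (by positivity)
    _ = (γ * a) ^ (j + 1) / (j + 1)! := by
        rw [Nat.factorial_succ, Nat.cast_mul]
        field_simp
        push_cast
        ring

theorem exp_neg_mul_pow_le_gammaCDF (hγ : 0 ≤ γ) (ha : 0 ≤ a) (ha1 : a ≤ 1) {k : ℕ}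
    (hk : k ≠ 0) : Real.exp (-γ) * γ ^ k / k ! * a ^ k ≤ gammaCDF γ k a := by
  obtain ⟨j, rfl⟩ := Nat.exists_eq_succ_of_ne_zero hk
  calc Real.exp (-γ) * γ ^ (j + 1) / (j + 1)! * a ^ (j + 1)
      = γ ^ (j + 1) / j ! * (Real.exp (-γ) * (a ^ (j + 1) / (j + 1))) := by
        rw [Nat.factorial_succ, Nat.cast_mul]
        field_simp
        push_cast
        ring
    _ ≤ γ ^ (j + 1) / j ! * (Real.exp (-γ * a) * (a ^ (j + 1) / (j + 1))) := by
        gcongr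
        nlinarith
    _ ≤ gammaCDF γ (j + 1) a := by
        simp only [gammaCDF, Nat.add_sub_cancel]
        exact mul_le_mul_of_nonneg_left
          (exp_neg_mul_mul_le_integral_pow_mul_exp_neg hγ ha j) (by positivity)

end GammaCDF

theorem toReal_measure_gt_inter_lt_le {Ω : Type*} [MeasurableSpace Ω] {P : Measure Ω}
    [IsFiniteMeasure P] {X : Ω → ℕ} {T : Ω → ℝ} {d nmin : ℕ} {γ c a : ℝ} (hγ : 0 ≤ γ)
    (hc : 0 < c) (hd : d ≤ nmin) (ha : 0 ≤ a) (ha1 : a ≤ 1)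
    (hjoint : ∀ n, (P ({ω | X ω = n} ∩ {ω | T ω < a})).toReal
      = (P {ω | X ω = n}).toReal * gammaCDF γ (n - d) a)
    (hbound : ∀ n, (P {ω | X ω = n}).toReal ≤ (c ^ (n - d))⁻¹ / (n - d)!) :
    (P ({ω | nmin < X ω} ∩ {ω | T ω < a})).toReal ≤ Real.exp (γ / c) * a ^ (nmin - d + 1) := by
  set m := nmin - d
  have hterm (j : ℕ) : (P ({ω | X ω = nmin + 1 + j} ∩ {ω | T ω < a})).toReal
      ≤ (γ / c) ^ (m + 1 + j) / (m + 1 + j)! * a ^ (m + 1) := by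
    have hk : nmin + 1 + j - d = m + 1 + j := by omega
    have hbound_k := hbound (nmin + 1 + j)
    rw [hjoint, hk]
    rw [hk] at hbound_k
    set k := m + 1 + j
    calc _ ≤ (c ^ k)⁻¹ / k ! * ((γ * a) ^ k / k !) :=
          mul_le_mul hbound_k (gammaCDF_le hγ ha (by omega)) (gammaCDF_nonneg hγ ha k)
            (by positivity)
      _ = (γ / c) ^ k / k ! * (a ^ k / k !) := by ring
      _ ≤ (γ / c) ^ k / k ! * a ^ (m + 1) := by
          gcongr
          calc a ^ k / k ! ≤ a ^ k :=
                div_le_self (by positivity) (Nat.one_le_cast.2 k.factorial_pos)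
            _ ≤ a ^ (m + 1) := pow_le_pow_of_le_one ha ha1 (by omega)
  have hcover : {ω | nmin < X ω} ∩ {ω | T ω < a}
      ⊆ ⋃ j, {ω | X ω = nmin + 1 + j} ∩ {ω | T ω < a} := by
    rintro ω ⟨hX : nmin < X ω, hT⟩
    exact mem_iUnion.2 ⟨X ω - nmin - 1, show X ω = nmin + 1 + (X ω - nmin - 1) by omega, hT⟩
  have hsummable : Summable fun j => (γ / c) ^ (m + 1 + j) / (m + 1 + j)! :=
    (Real.summable_pow_div_factorial _).comp_injective (add_right_injective (m + 1))
  calc _ ≤ ∑' j, (γ / c) ^ (m + 1 + j) / (m + 1 + j)! * a ^ (m + 1) :=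
        toReal_measure_le_tsum_of_subset_iUnion hcover (hsummable.mul_right _) hterm
    _ = (∑' j, (γ / c) ^ (m + 1 + j) / (m + 1 + j)!) * a ^ (m + 1) := tsum_mul_right
    _ ≤ Real.exp (γ / c) * a ^ (m + 1) := by
        gcongr
        rw [← Real.tsum_pow_div_factorial]
        exact tsum_comp_le_tsum_of_inj (Real.summable_pow_div_factorial _)
          (fun n => by positivity) (add_right_injective (m + 1))

theorem stmt11_general {Ω : Type*} [MeasurableSpace Ω] (P : Measure Ω) [IsProbabilityMeasure P]
    (X : Ω → ℕ) (T : Ω → ℝ) (d : ℕ) (γ c : ℝ) (hγ : 0 < γ) (hc : 0 < c)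
    (hsupp : ∀ n, P {ω | X ω = n} ≠ 0 → d < n)
    -- conditionally on {X = n}, T is Gamma(γ, n-d) distributed:
    (hGamma : ∀ n, P {ω | X ω = n} ≠ 0 → ∀ a : ℝ, 0 ≤ a →
      (P ({ω | X ω = n} ∩ {ω | T ω < a})).toReal
        = (P {ω | X ω = n}).toReal *
            (γ ^ (n - d) / (Nat.factorial (n - d - 1)) *
              ∫ t in (0 : ℝ)..a, t ^ (n - d - 1) * Real.exp (-γ * t)))
    (nmin : ℕ) (hmin : P {ω | X ω = nmin} ≠ 0)
    (hbound : ∀ n, (P {ω | X ω = n}).toReal ≤ (c ^ (n - d))⁻¹ / (Nat.factorial (n - d))) :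
    Tendsto
      (fun a : ℝ =>
        (P ({ω | nmin < X ω} ∩ {ω | T ω < a})).toReal / (P {ω | T ω < a}).toReal)
      (nhdsWithin 0 (Ioi 0)) (nhds 0) := by
  have hd : d < nmin := hsupp nmin hmin
  have hjoint (a : ℝ) (ha : 0 ≤ a) (n : ℕ) : (P ({ω | X ω = n} ∩ {ω | T ω < a})).toReal
      = (P {ω | X ω = n}).toReal * gammaCDF γ (n - d) a := by
    by_cases hn : P {ω | X ω = n} = 0
    · simp [hn, measure_mono_null inter_subset_left hn]
    · exact hGamma n hn a ha
  have hpmin : 0 < (P {ω | X ω = nmin}).toReal := ENNReal.toReal_pos hmin (measure_ne_top P _)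
  refine tendsto_div_nhdsGT_zero_of_le_pow_succ (m := nmin - d) (C := Real.exp (γ / c))
    (c := (P {ω | X ω = nmin}).toReal * (Real.exp (-γ) * γ ^ (nmin - d) / (nmin - d)!))
    (by positivity) ?_
  filter_upwards [Ioc_mem_nhdsGT one_pos] with a ⟨ha0, ha1⟩
  refine ⟨ENNReal.toReal_nonneg,
    toReal_measure_gt_inter_lt_le hγ.le hc hd.le ha0.le ha1 (hjoint a ha0.le) hbound, ?_⟩
  calc _ ≤ (P {ω | X ω = nmin}).toReal * gammaCDF γ (nmin - d) a := by
        rw [mul_assoc]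
        gcongr
        exact exp_neg_mul_pow_le_gammaCDF hγ.le ha0.le ha1 (by omega)
    _ = (P ({ω | X ω = nmin} ∩ {ω | T ω < a})).toReal := (hjoint a ha0.le nmin).symm
    _ ≤ (P {ω | T ω < a}).toReal :=
        ENNReal.toReal_mono (measure_ne_top P _) (measure_mono inter_subset_right)

theorem stmt11 {Ω : Type*} [MeasurableSpace Ω] (P : Measure Ω) [IsProbabilityMeasure P]
    (X : Ω → ℕ) (T : Ω → ℝ) (hT : ∀ ω, 0 ≤ T ω) (d : ℕ) (γ c : ℝ) (hγ : 0 < γ) (hc : 0 < c)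
    (hsupp : ∀ n, P {ω | X ω = n} ≠ 0 → d < n)
    -- conditionally on {X = n}, T is Gamma(γ, n-d) distributed:
    (hGamma : ∀ n, P {ω | X ω = n} ≠ 0 → ∀ a : ℝ, 0 ≤ a →
      (P ({ω | X ω = n} ∩ {ω | T ω < a})).toReal
        = (P {ω | X ω = n}).toReal *
            (γ ^ (n - d) / (Nat.factorial (n - d - 1)) *
              ∫ t in (0 : ℝ)..a, t ^ (n - d - 1) * Real.exp (-γ * t)))
    (nmin : ℕ) (hmin : P {ω | X ω = nmin} ≠ 0) (hmin' : ∀ n < nmin, P {ω | X ω = n} = 0)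
    (hbound : ∀ n, (P {ω | X ω = n}).toReal ≤ (c ^ (n - d))⁻¹ / (Nat.factorial (n - d))) :
    Tendsto
      (fun a : ℝ =>
        (P ({ω | nmin < X ω} ∩ {ω | T ω < a})).toReal / (P {ω | T ω < a}).toReal)
      (nhdsWithin 0 (Ioi 0)) (nhds 0) :=
  stmt11_general P X T d γ c hγ hc hsupp hGamma nmin hmin hbound
end

section
/- Let μ be a finite Borel measure on a space of normalized polytopes, Σ a measurable function with Σ ≥ c > 0 on the support of μ, γ > 0, and m ≥ 1 an integer. Then (γa)^{-m} · (γ^m/(m-1)!) ∫ ∫₀^{a/Σ(P)} e^{-γt} t^{m-1} dt dμ(P) converges, as a → 0, monotonically increasing to (1/m!) ∫ Σ(P)^{-m} dμ(P), and is bounded above by this limit for every a > 0. -/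
/-!
Substituting `t = (a / Σ) s` turns the normalized inner integral into
`Σ⁻ᵐ / (m-1)! · ∫₀¹ e^{-γ a s / Σ} s^{m-1} ds`. The last factor is antitone and continuous in
`a / Σ`, with value `1 / m` at `0`; so monotonicity and the upper bound hold pointwise, and the
limit follows by dominated convergence with dominating function `c⁻ᵐ / m!`.
-/

open MeasureTheory Set Filter Topology

noncomputable def normalizedExpMoment (γ : ℝ) (n : ℕ) (r : ℝ) : ℝ :=
  ∫ s in (0 : ℝ)..1, Real.exp (-γ * r * s) * s ^ n

namespace normalizedExpMoment

theorem intervalIntegral_exp_mul_pow (γ : ℝ) (n : ℕ) (r : ℝ) :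
    ∫ t in (0 : ℝ)..r, Real.exp (-γ * t) * t ^ n = r ^ (n + 1) * normalizedExpMoment γ n r := by
  rcases eq_or_ne r 0 with rfl | hr
  · simp
  have h := intervalIntegral.integral_comp_mul_right
    (a := 0) (b := 1) (fun t => Real.exp (-γ * t) * t ^ n) hr
  rw [zero_mul, one_mul, smul_eq_mul, eq_inv_mul_iff_mul_eq₀ hr] at h
  rw [← h, normalizedExpMoment, ← intervalIntegral.integral_const_mul,
    ← intervalIntegral.integral_const_mul]
  congr 1 with s
  ring_nf

theorem const_mul_intervalIntegral_exp_mul_pow_div {γ a : ℝ} (hγ : γ ≠ 0) (ha : a ≠ 0) (n : ℕ)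
    (σ : ℝ) :
    ((γ * a) ^ (n + 1))⁻¹ * (γ ^ (n + 1) / n.factorial) *
        ∫ t in (0 : ℝ)..(a / σ), Real.exp (-γ * t) * t ^ n =
      (n.factorial : ℝ)⁻¹ * (σ ^ (n + 1))⁻¹ * normalizedExpMoment γ n (a / σ) := by
  rw [intervalIntegral_exp_mul_pow, div_pow, mul_pow]
  field_simp

theorem nonneg (γ : ℝ) (n : ℕ) (r : ℝ) : 0 ≤ normalizedExpMoment γ n r :=
  intervalIntegral.integral_nonneg zero_le_one
    fun _ hs => mul_nonneg (Real.exp_pos _).le (pow_nonneg hs.1 _)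

theorem antitone {γ : ℝ} (hγ : 0 ≤ γ) (n : ℕ) : Antitone (normalizedExpMoment γ n) := by
  intro r r' hrr'
  refine intervalIntegral.integral_mono_on zero_le_one
    (Continuous.intervalIntegrable (by fun_prop) _ _)
    (Continuous.intervalIntegrable (by fun_prop) _ _) fun s hs =>
    mul_le_mul_of_nonneg_right (Real.exp_le_exp.2 (by nlinarith [mul_nonneg hγ hs.1]))
      (pow_nonneg hs.1 n)

theorem continuous (γ : ℝ) (n : ℕ) : Continuous (normalizedExpMoment γ n) :=
  intervalIntegral.continuous_parametric_intervalIntegral_of_continuous' (by fun_prop) _ _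

theorem apply_zero (γ : ℝ) (n : ℕ) : normalizedExpMoment γ n 0 = 1 / (n + 1) := by
  simp [normalizedExpMoment, integral_pow]

end normalizedExpMoment

section RescaledIntegral

variable {α : Type*} [MeasurableSpace α] {μ : Measure α} {w Siz : α → ℝ} {g : ℝ → ℝ}

theorem integrable_inv_pow_of_ae_le [IsFiniteMeasure μ] (hSiz : AEMeasurable Siz μ) {c : ℝ}
    (hc : 0 < c) (hge : ∀ᵐ Q ∂μ, c ≤ Siz Q) (k : ℕ) : Integrable (fun Q => (Siz Q ^ k)⁻¹) μ := by
  refine (integrable_const (c ^ k)⁻¹).mono' (hSiz.pow_const k).inv.aestronglyMeasurable ?_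
  filter_upwards [hge] with Q hQ
  have hQ0 : 0 < Siz Q := hc.trans_le hQ
  rw [Real.norm_of_nonneg (by positivity)]
  gcongr

theorem ae_norm_mul_comp_div_le (hg : Antitone g) (hg0 : 0 ≤ g) (hSiz : ∀ᵐ Q ∂μ, 0 ≤ Siz Q)
    {a : ℝ} (ha : 0 ≤ a) : ∀ᵐ Q ∂μ, ‖w Q * g (a / Siz Q)‖ ≤ ‖w Q‖ * g 0 := by
  filter_upwards [hSiz] with Q hQ
  rw [norm_mul, Real.norm_of_nonneg (hg0 _)]
  exact mul_le_mul_of_nonneg_left (hg (div_nonneg ha hQ)) (norm_nonneg _)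

theorem integrable_mul_comp_div (hw : Integrable w μ) (hSizm : AEMeasurable Siz μ)
    (hg : Antitone g) (hg0 : 0 ≤ g) (hSiz : ∀ᵐ Q ∂μ, 0 ≤ Siz Q) {a : ℝ} (ha : 0 ≤ a) :
    Integrable (fun Q => w Q * g (a / Siz Q)) μ :=
  (hw.norm.mul_const _).mono'
    (hw.aestronglyMeasurable.mul
      (hg.measurable.comp_aemeasurable (aemeasurable_const.div hSizm)).aestronglyMeasurable)
    (ae_norm_mul_comp_div_le hg hg0 hSiz ha)

theorem antitoneOn_integral_mul_comp_div (hw : Integrable w μ) (hw0 : 0 ≤ᵐ[μ] w)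
    (hSizm : AEMeasurable Siz μ) (hg : Antitone g) (hg0 : 0 ≤ g) (hSiz : ∀ᵐ Q ∂μ, 0 ≤ Siz Q) :
    AntitoneOn (fun a => ∫ Q, w Q * g (a / Siz Q) ∂μ) (Ici 0) := by
  intro a ha b hb hab
  refine integral_mono_ae (integrable_mul_comp_div hw hSizm hg hg0 hSiz hb)
    (integrable_mul_comp_div hw hSizm hg hg0 hSiz ha) ?_
  filter_upwards [hw0, hSiz] with Q hwQ hQ
  exact mul_le_mul_of_nonneg_left (hg (div_le_div_of_nonneg_right hab hQ)) hwQ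

theorem integral_mul_comp_div_le (hw : Integrable w μ) (hw0 : 0 ≤ᵐ[μ] w)
    (hSizm : AEMeasurable Siz μ) (hg : Antitone g) (hg0 : 0 ≤ g) (hSiz : ∀ᵐ Q ∂μ, 0 ≤ Siz Q)
    {a : ℝ} (ha : 0 ≤ a) : ∫ Q, w Q * g (a / Siz Q) ∂μ ≤ (∫ Q, w Q ∂μ) * g 0 := by
  simpa [integral_mul_const] using
    antitoneOn_integral_mul_comp_div hw hw0 hSizm hg hg0 hSiz self_mem_Ici ha ha

theorem tendsto_integral_mul_comp_div (hw : Integrable w μ) (hSizm : AEMeasurable Siz μ)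
    (hg : Antitone g) (hg0 : 0 ≤ g) (hgc : ContinuousWithinAt g (Ici 0) 0)
    (hSiz : ∀ᵐ Q ∂μ, 0 ≤ Siz Q) :
    Tendsto (fun a => ∫ Q, w Q * g (a / Siz Q) ∂μ) (𝓝[>] 0) (𝓝 ((∫ Q, w Q ∂μ) * g 0)) := by
  rw [← integral_mul_const]
  refine tendsto_integral_filter_of_dominated_convergence (fun Q => ‖w Q‖ * g 0) ?_ ?_
    (hw.norm.mul_const _) ?_
  · filter_upwards [self_mem_nhdsWithin] with a (ha : 0 < a)
    exact (integrable_mul_comp_div hw hSizm hg hg0 hSiz ha.le).aestronglyMeasurable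
  · filter_upwards [self_mem_nhdsWithin] with a (ha : 0 < a)
    exact ae_norm_mul_comp_div_le hg hg0 hSiz ha.le
  · filter_upwards [hSiz] with Q hQ
    have hdiv : Tendsto (fun a : ℝ => a / Siz Q) (𝓝[>] 0) (𝓝[≥] 0) := by
      refine tendsto_nhdsWithin_iff.2 ⟨?_, ?_⟩
      · simpa using ((continuous_id.div_const (Siz Q)).tendsto 0).mono_left nhdsWithin_le_nhds
      · filter_upwards [self_mem_nhdsWithin] with a (ha : 0 < a)
        exact div_nonneg ha.le hQ
    exact (hgc.tendsto.comp hdiv).const_mul _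

end RescaledIntegral

theorem stmt13 {α : Type*} [MeasurableSpace α] (μ : Measure α) [IsFiniteMeasure μ]
    (Siz : α → ℝ) (hSiz : Measurable Siz) (c : ℝ) (hc : 0 < c)
    (hge : ∀ᵐ Q ∂μ, c ≤ Siz Q) (γ : ℝ) (hγ : 0 < γ) (m : ℕ) (hm : 1 ≤ m) :
    AntitoneOn
      (fun a : ℝ => ((γ * a) ^ m)⁻¹ * (γ ^ m / (Nat.factorial (m - 1))) *
        ∫ Q, (∫ t in (0 : ℝ)..(a / Siz Q), Real.exp (-γ * t) * t ^ (m - 1)) ∂μ)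
      (Ioi 0) ∧
    Tendsto
      (fun a : ℝ => ((γ * a) ^ m)⁻¹ * (γ ^ m / (Nat.factorial (m - 1))) *
        ∫ Q, (∫ t in (0 : ℝ)..(a / Siz Q), Real.exp (-γ * t) * t ^ (m - 1)) ∂μ)
      (nhdsWithin 0 (Ioi 0))
      (nhds ((1 / (Nat.factorial m)) * ∫ Q, (Siz Q ^ m)⁻¹ ∂μ)) ∧
    ∀ a : ℝ, 0 < a →
      ((γ * a) ^ m)⁻¹ * (γ ^ m / (Nat.factorial (m - 1))) *
          (∫ Q, (∫ t in (0 : ℝ)..(a / Siz Q), Real.exp (-γ * t) * t ^ (m - 1)) ∂μ)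
        ≤ (1 / (Nat.factorial m)) * ∫ Q, (Siz Q ^ m)⁻¹ ∂μ := by
  obtain ⟨n, rfl⟩ : ∃ n, m = n + 1 := ⟨m - 1, by omega⟩
  simp only [Nat.add_sub_cancel]
  set w : α → ℝ := fun Q => (n.factorial : ℝ)⁻¹ * (Siz Q ^ (n + 1))⁻¹
  have hSiz0 : ∀ᵐ Q ∂μ, 0 ≤ Siz Q := hge.mono fun Q hQ => hc.le.trans hQ
  have hw0 : 0 ≤ᵐ[μ] w := hSiz0.mono fun Q hQ => by positivity
  have hw : Integrable w μ :=
    (integrable_inv_pow_of_ae_le hSiz.aemeasurable hc hge (n + 1)).const_mul _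
  have hF : EqOn (fun a : ℝ => ((γ * a) ^ (n + 1))⁻¹ * (γ ^ (n + 1) / n.factorial) *
        ∫ Q, (∫ t in (0 : ℝ)..(a / Siz Q), Real.exp (-γ * t) * t ^ n) ∂μ)
      (fun a => ∫ Q, w Q * normalizedExpMoment γ n (a / Siz Q) ∂μ) (Ioi 0) := fun a ha => by
    simp only [← integral_const_mul,
      normalizedExpMoment.const_mul_intervalIntegral_exp_mul_pow_div hγ.ne' (ne_of_gt ha), w]
  have hlim : (1 / ((n + 1).factorial : ℝ)) * ∫ Q, (Siz Q ^ (n + 1))⁻¹ ∂μ =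
      (∫ Q, w Q ∂μ) * normalizedExpMoment γ n 0 := by
    simp only [w, integral_const_mul, normalizedExpMoment.apply_zero, Nat.factorial_succ]
    push_cast
    field_simp
  have hG := normalizedExpMoment.antitone hγ.le n
  have hG0 := normalizedExpMoment.nonneg γ n
  refine ⟨?_, ?_, fun a ha => ?_⟩
  · exact ((antitoneOn_integral_mul_comp_div hw hw0 hSiz.aemeasurable hG hG0 hSiz0).mono
      Ioi_subset_Ici_self).congr hF.symm
  · rw [hlim]
    refine (tendsto_integral_mul_comp_div hw hSiz.aemeasurable hG hG0
      (normalizedExpMoment.continuous γ n).continuousWithinAt hSiz0).congr' ?_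
    filter_upwards [self_mem_nhdsWithin] with a ha using (hF ha).symm
  · rw [hlim]
    exact (hF ha).trans_le (integral_mul_comp_div_le hw hw0 hSiz.aemeasurable hG hG0 hSiz0 ha.le)
end
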